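/- In the Eisenberg–Noe model, for every x ∈ ℝ^d such that the linear program P(x) is feasible, every optimal solution p of P(x) is a clearing payment vector, i.e., p satisfies p_i = min{ p̄_i , x_i + Σ_{j=1}^d a_{ji} p_j } for every i ∈ {1,…,d}. -/

import Mathlib

open scoped ENNReal

noncomputable section

namespace EisenbergNoe

/-- Total liability `p̄ᵢ = ∑_{j=0}^d ℓ_{ij}` of institution `i` (institutions are the
nodes `1,…,d`, encoded as `i.succ` for `i : Fin d`; node `0` is society). -/
def pbar {d : ℕ} (ℓ : Fin (d + 1) → Fin (d + 1) → ℝ) (i : Fin d) : ℝ :=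
  ∑ j, ℓ i.succ j

/-- Relative liability `a_{ij} = ℓ_{ij} / p̄ᵢ` of institution `i` to node `j`. -/
def rel {d : ℕ} (ℓ : Fin (d + 1) → Fin (d + 1) → ℝ) (i : Fin d) (j : Fin (d + 1)) : ℝ :=
  ℓ i.succ j / pbar ℓ i

/-- Feasibility for the Eisenberg–Noe linear program `P(x)`:
`pᵢ ≤ xᵢ + ∑_{j=1}^d a_{ji} pⱼ` and `0 ≤ pᵢ ≤ p̄ᵢ` for all `i`. -/
def Feasible {d : ℕ} (ℓ : Fin (d + 1) → Fin (d + 1) → ℝ) (x p : Fin d → ℝ) : Prop :=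
  (∀ i, p i ≤ x i + ∑ j, rel ℓ j i.succ * p j) ∧ ∀ i, 0 ≤ p i ∧ p i ≤ pbar ℓ i

/-- The objective `∑_{i=1}^d a_{i0} pᵢ` of `P(x)` (the equity of society). -/
def obj {d : ℕ} (ℓ : Fin (d + 1) → Fin (d + 1) → ℝ) (p : Fin d → ℝ) : ℝ :=
  ∑ i, rel ℓ i 0 * p i

/-!
A feasible `p` satisfies `pᵢ ≤ min (p̄ᵢ, xᵢ + ∑ⱼ aⱼᵢ pⱼ)`. If this were strict for some `i`,
raising `pᵢ` alone to the bound would keep `P(x)` feasible: no bank owes itself (`aᵢᵢ = 0`), so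
the bound of constraint `i` does not move, and the other constraints only gain room (`aᵢₖ ≥ 0`).
The objective would grow by `aᵢ₀ · (slack) > 0`, contradicting optimality.
-/

open Finset Function

section

variable {d : ℕ} {ℓ : Fin (d + 1) → Fin (d + 1) → ℝ}

theorem pbar_nonneg (hℓnn : ∀ i j, 0 ≤ ℓ i j) (i : Fin d) : 0 ≤ pbar ℓ i :=
  sum_nonneg fun j _ => hℓnn i.succ j

theorem pbar_pos (hℓnn : ∀ i j, 0 ≤ ℓ i j) {i : Fin d} (hi : 0 < ℓ i.succ 0) : 0 < pbar ℓ i :=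
  hi.trans_le <| single_le_sum (fun j _ => hℓnn i.succ j) (mem_univ 0)

theorem rel_nonneg (hℓnn : ∀ i j, 0 ≤ ℓ i j) (i : Fin d) (j : Fin (d + 1)) : 0 ≤ rel ℓ i j :=
  div_nonneg (hℓnn _ _) (pbar_nonneg hℓnn i)

theorem rel_zero_pos (hℓnn : ∀ i j, 0 ≤ ℓ i j) {i : Fin d} (hi : 0 < ℓ i.succ 0) :
    0 < rel ℓ i 0 :=
  div_pos hi (pbar_pos hℓnn hi)

theorem rel_succ_self {i : Fin d} (hii : ℓ i.succ i.succ = 0) : rel ℓ i i.succ = 0 := by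
  rw [rel, hii, zero_div]

variable (ℓ) in
theorem obj_update (p : Fin d → ℝ) (i : Fin d) (c : ℝ) :
    obj ℓ (update p i c) = obj ℓ p + rel ℓ i 0 * (c - p i) := by
  rw [obj, obj, ← sub_eq_iff_eq_add', ← sum_sub_distrib]
  simp_rw [← mul_sub]
  refine (sum_eq_single i (fun j _ hj => ?_) (by simp)).trans (by rw [update_self])
  rw [update_of_ne hj, sub_self, mul_zero]

theorem Feasible.le_min {x p : Fin d → ℝ} (hp : Feasible ℓ x p) (i : Fin d) :
    p i ≤ min (pbar ℓ i) (x i + ∑ j, rel ℓ j i.succ * p j) :=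
  _root_.le_min (hp.2 i).2 (hp.1 i)

theorem Feasible.update_of_le_min {x p : Fin d → ℝ} (hp : Feasible ℓ x p)
    (hrel : ∀ j k, 0 ≤ rel ℓ j k) {i : Fin d} (hii : rel ℓ i i.succ = 0) {c : ℝ}
    (hpc : p i ≤ c) (hc : c ≤ min (pbar ℓ i) (x i + ∑ j, rel ℓ j i.succ * p j)) :
    Feasible ℓ x (update p i c) := by
  have hmono : p ≤ update p i c := le_update_self_iff.2 hpc
  have hinflow_i : ∑ j, rel ℓ j i.succ * update p i c j = ∑ j, rel ℓ j i.succ * p j := by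
    refine sum_congr rfl fun j _ => ?_
    rcases eq_or_ne j i with rfl | hj
    · rw [hii, zero_mul, zero_mul]
    · rw [update_of_ne hj]
  refine ⟨fun k => ?_, fun k => ?_⟩
  · rcases eq_or_ne k i with rfl | hk
    · rw [update_self, hinflow_i]
      exact hc.trans (min_le_right _ _)
    · rw [update_of_ne hk]
      refine (hp.1 k).trans ?_
      gcongr with j
      · exact hrel j k.succ
      · exact hmono j
  · rcases eq_or_ne k i with rfl | hk
    · rw [update_self]
      exact ⟨(hp.2 k).1.trans hpc, hc.trans (min_le_left _ _)⟩
    · rw [update_of_ne hk]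
      exact hp.2 k

end

theorem eisenbergNoe_optimal_is_clearing_general
    (d : ℕ) (ℓ : Fin (d + 1) → Fin (d + 1) → ℝ)
    (hℓnn : ∀ i j, 0 ≤ ℓ i j)
    (hto0 : ∀ i : Fin d, 0 < ℓ i.succ 0)
    (hself : ∀ i, ℓ i i = 0)
    (x : Fin d → ℝ) (p : Fin d → ℝ)
    (hfeas : Feasible ℓ x p)
    (hopt : ∀ q : Fin d → ℝ, Feasible ℓ x q → obj ℓ q ≤ obj ℓ p) :
    ∀ i, p i = min (pbar ℓ i) (x i + ∑ j, rel ℓ j i.succ * p j) := by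
  intro i
  set m := min (pbar ℓ i) (x i + ∑ j, rel ℓ j i.succ * p j)
  refine le_antisymm (hfeas.le_min i) (not_lt.1 fun hslack => ?_)
  have hq :=
    hfeas.update_of_le_min (rel_nonneg hℓnn) (rel_succ_self (hself i.succ)) hslack.le le_rfl
  have hgain := mul_pos (rel_zero_pos hℓnn (hto0 i)) (sub_pos.2 hslack)
  linarith [obj_update ℓ p i m, hopt _ hq]

/-- In the Eisenberg–Noe model, for every state `x` for which the
linear program `P(x)` is feasible, every optimal solution of `P(x)` is a clearing
payment vector. -/
theorem eisenbergNoe_optimal_is_clearing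
    (d : ℕ) (hd : 1 ≤ d) (ℓ : Fin (d + 1) → Fin (d + 1) → ℝ)
    (hℓnn : ∀ i j, 0 ≤ ℓ i j)
    (hsoc : ∀ i : Fin d, ℓ 0 i.succ = 0)
    (hto0 : ∀ i : Fin d, 0 < ℓ i.succ 0)
    (hself : ∀ i, ℓ i i = 0)
    (x : Fin d → ℝ) (p : Fin d → ℝ)
    (hfeas : Feasible ℓ x p)
    (hopt : ∀ q : Fin d → ℝ, Feasible ℓ x q → obj ℓ q ≤ obj ℓ p) :
    ∀ i, p i = min (pbar ℓ i) (x i + ∑ j, rel ℓ j i.succ * p j) :=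
  eisenbergNoe_optimal_is_clearing_general d ℓ hℓnn hto0 hself x p hfeas hopt

end EisenbergNoe
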